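/- arXiv:2306.09957 — 2 statements merged into one kernel-verified Lean document; each statement's English description precedes it below -/
import Mathlib

section
/- Let P be idempotent, Q = I - P, ε linear with spectral radius of ε Q strictly less than 1. Then Mᵏ = (P + ε Q)ᵏ converges as k → ∞, with limit P (I - ε Q)⁻¹. -/
open Filter
open scoped NNReal ENNReal

/-- If the spectral radius of `E` is `< 1`, then `‖E ^ n‖₊` is eventually bounded by `r ^ n`
for some `r < 1`. -/
lemma aux_pow_bound {A : Type*} [NormedRing A] [NormedAlgebra ℂ A] [CompleteSpace A]
    (E : A) (hρ : spectralRadius ℂ E < 1) :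
    ∃ r : ℝ≥0, r < 1 ∧ ∀ᶠ n : ℕ in atTop, ‖E ^ n‖₊ ≤ r ^ n := by
  obtain ⟨r, hρr, hr1⟩ := exists_between hρ
  have hrtop : r ≠ ⊤ := (hr1.trans ENNReal.one_lt_top).ne
  refine ⟨r.toNNReal, ?_, ?_⟩
  · have := ENNReal.coe_toNNReal hrtop
    rw [← ENNReal.coe_lt_one_iff, this]; exact hr1
  · have hev : ∀ᶠ n : ℕ in atTop, (‖E ^ n‖₊ : ℝ≥0∞) ^ (1 / (n : ℝ)) < r :=
      (spectrum.pow_nnnorm_pow_one_div_tendsto_nhds_spectralRadius E).eventually_lt_const hρr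
    filter_upwards [hev, eventually_ge_atTop 1] with n hn hn1
    have hn0 : (n : ℝ) ≠ 0 := by positivity
    have h2 : ((‖E ^ n‖₊ : ℝ≥0∞) ^ (1 / (n : ℝ))) ^ (n : ℝ) ≤ r ^ (n : ℝ) :=
      ENNReal.rpow_le_rpow hn.le (by positivity)
    have hx : (‖E ^ n‖₊ : ℝ≥0∞) = ((‖E ^ n‖₊ : ℝ≥0∞) ^ (1 / (n : ℝ))) ^ (n : ℝ) := by
      rw [← ENNReal.rpow_mul, one_div, inv_mul_cancel₀ hn0, ENNReal.rpow_one]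
    rw [← ENNReal.coe_le_coe, ENNReal.coe_pow, ENNReal.coe_toNNReal hrtop,
      ← ENNReal.rpow_natCast r n, hx]
    exact h2

/-- if ρ(ε Q) < 1, then Mᵏ = (P + ε Q)ᵏ converges to P (I - ε Q)⁻¹. -/
theorem stmt_12 {V : Type*} [NormedAddCommGroup V] [NormedSpace ℂ V]
    [FiniteDimensional ℂ V]
    (P ε : V →L[ℂ] V) (hP : P * P = P)
    (hρ : spectralRadius ℂ (ε * (1 - P)) < 1) :
    Tendsto (fun k => (P + ε * (1 - P)) ^ k) atTop
      (nhds (P * Ring.inverse (1 - ε * (1 - P)))) := by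
  set E := ε * (1 - P) with hE
  have hEP : E * P = 0 := by
    have : (1 - P) * P = 0 := by rw [sub_mul, one_mul, hP, sub_self]
    rw [hE, mul_assoc, this, mul_zero]
  -- key algebraic identity
  have key : ∀ k : ℕ, (P + E) ^ k = P * (∑ i ∈ Finset.range k, E ^ i) + E ^ k := by
    intro k
    induction k with
    | zero => simp
    | succ k ih =>
      rw [pow_succ', ih, Finset.sum_range_succ]
      simp only [mul_add, add_mul, ← mul_assoc, hP, hEP, zero_mul, zero_add, add_zero]
      rw [← pow_succ']
      abel
  -- norm bounds
  obtain ⟨r, hr1, hev⟩ := aux_pow_bound E hρ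
  have hrR : (r : ℝ) < 1 := hr1
  have hevR : ∀ᶠ n : ℕ in atTop, ‖E ^ n‖ ≤ (r : ℝ) ^ n := by
    filter_upwards [hev] with n hn
    exact_mod_cast hn
  -- summability of the geometric series
  have hsum : Summable (fun n : ℕ => E ^ n) :=
    Summable.of_norm_bounded_eventually_nat
      (summable_geometric_of_lt_one r.coe_nonneg hrR) hevR
  set L := ∑' n : ℕ, E ^ n with hL
  have hS : Tendsto (fun k => ∑ i ∈ Finset.range k, E ^ i) atTop (nhds L) :=
    hsum.hasSum.tendsto_sum_nat
  -- E ^ k → 0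
  have h0 : Tendsto (fun k : ℕ => E ^ k) atTop (nhds 0) := by
    rw [tendsto_zero_iff_norm_tendsto_zero]
    refine squeeze_zero' (Eventually.of_forall fun n => norm_nonneg _) hevR ?_
    exact tendsto_pow_atTop_nhds_zero_of_lt_one r.coe_nonneg hrR
  -- L is the inverse of 1 - E
  have hmul : (1 - E) * L = 1 := by
    have h1 : Tendsto (fun k => (1 - E) * ∑ i ∈ Finset.range k, E ^ i) atTop
        (nhds ((1 - E) * L)) := hS.const_mul _
    have h2 : ∀ k : ℕ, (1 - E) * ∑ i ∈ Finset.range k, E ^ i = 1 - E ^ k := by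
      intro k
      rw [sub_mul, one_mul, Finset.mul_sum]
      simp_rw [← pow_succ']
      rw [← Finset.sum_sub_distrib, Finset.sum_range_sub' (fun i => E ^ i), pow_zero]
    simp_rw [h2] at h1
    have h3 : Tendsto (fun k : ℕ => 1 - E ^ k) atTop (nhds (1 : V →L[ℂ] V)) := by
      simpa using (tendsto_const_nhds (x := (1 : V →L[ℂ] V))).sub h0
    exact tendsto_nhds_unique h1 h3
  have hmul' : L * (1 - E) = 1 := by
    have h1 : Tendsto (fun k => (∑ i ∈ Finset.range k, E ^ i) * (1 - E)) atTop
        (nhds (L * (1 - E))) := hS.mul_const _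
    have h2 : ∀ k : ℕ, (∑ i ∈ Finset.range k, E ^ i) * (1 - E) = 1 - E ^ k := by
      intro k
      rw [mul_sub, mul_one, Finset.sum_mul]
      simp_rw [← pow_succ]
      rw [← Finset.sum_sub_distrib, Finset.sum_range_sub' (fun i => E ^ i), pow_zero]
    simp_rw [h2] at h1
    have h3 : Tendsto (fun k : ℕ => 1 - E ^ k) atTop (nhds (1 : V →L[ℂ] V)) := by
      simpa using (tendsto_const_nhds (x := (1 : V →L[ℂ] V))).sub h0
    exact tendsto_nhds_unique h1 h3
  have hinv : Ring.inverse (1 - E) = L := by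
    have hu : IsUnit (1 - E) := ⟨⟨1 - E, L, hmul, hmul'⟩, rfl⟩
    obtain ⟨u, hu⟩ := hu
    rw [← hu, Ring.inverse_unit]
    have : (u : V →L[ℂ] V) * L = 1 := by rw [hu]; exact hmul
    calc (↑u⁻¹ : V →L[ℂ] V) = ↑u⁻¹ * ((u : V →L[ℂ] V) * L) := by rw [this, mul_one]
    _ = L := by rw [← mul_assoc, ← Units.val_mul]; simp
  rw [hinv]
  simp_rw [key]
  have := (hS.const_mul P).add h0
  simpa using this
end

section
/- Let M = P + ε Q with P idempotent, Q = I - P, and ρ(ε Q) < 1. Then every eigenvalue λ of M with λ ≠ 1 satisfies |λ| < 1. -/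
/-- if ρ(ε Q) < 1, every eigenvalue λ ≠ 1 of M = P + ε Q has |λ| < 1. -/
theorem stmt_13 {V : Type*} [NormedAddCommGroup V] [NormedSpace ℂ V]
    [FiniteDimensional ℂ V]
    (P ε : V →L[ℂ] V) (hP : P * P = P)
    (hρ : spectralRadius ℂ (ε * (1 - P)) < 1)
    (lam : ℂ) (X : V) (hX : X ≠ 0)
    (heig : (P + ε * (1 - P)) X = lam • X) (hlam : lam ≠ 1) :
    ‖lam‖ < 1 := by
  by_cases h0 : lam = 0
  · simp [h0]
  set T : V →L[ℂ] V := ε * (1 - P) with hT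
  set Z : V := T X with hZ
  have heig' : P X + Z = lam • X := by
    simpa [hZ, hT] using heig
  by_cases hZ0 : Z = 0
  · -- then P X = lam • X, so lam² = lam, lam = 0 or 1, contradiction
    have hPX : P X = lam • X := by simpa [hZ0] using heig'
    have h2 : P (P X) = P X := by
      have := congrFun (congrArg DFunLike.coe hP) X
      simpa using this
    have : lam • (lam • X) = lam • X := by
      calc lam • lam • X = lam • P X := by rw [hPX]
        _ = P (lam • X) := (map_smul P lam X).symm
        _ = P (P X) := by rw [hPX]
        _ = P X := h2
        _ = lam • X := hPX
    have hsm : (lam * lam - lam) • X = 0 := by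
      rw [sub_smul, mul_smul, this, sub_self]
    have : lam * lam - lam = 0 := by
      by_contra hne
      exact hX (by simpa [hne] using smul_eq_zero.mp hsm)
    have : lam * (lam - 1) = 0 := by ring_nf; linear_combination this
    rcases mul_eq_zero.mp this with h | h
    · exact absurd h h0
    · exact absurd (by linear_combination h) hlam
  · -- Z is an eigenvector of T with eigenvalue lam
    have key : T Z = lam • Z := by
      have hQ : (1 - P) (P X + Z) = lam • ((1 - P) X) := by
        rw [heig', map_smul]
      have hPP : P (P X) = P X := by
        have := congrFun (congrArg DFunLike.coe hP) X
        simpa using this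
      have h1 : (1 - P) (P X + Z) = Z - P Z := by
        simp only [ContinuousLinearMap.sub_apply, map_add, hPP,
          ContinuousLinearMap.one_apply]
        abel
      have h2 : Z - P Z = lam • (X - P X) := by
        rw [← h1, hQ]; simp [ContinuousLinearMap.sub_apply]
      calc T Z = ε ((1 - P) Z) := rfl
        _ = ε (Z - P Z) := by simp [ContinuousLinearMap.sub_apply]
        _ = ε (lam • (X - P X)) := by rw [h2]
        _ = lam • (ε (X - P X)) := by rw [map_smul]
        _ = lam • Z := by
            simp [hZ, hT, ContinuousLinearMap.mul_apply,
              ContinuousLinearMap.sub_apply]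
    -- hence lam ∈ spectrum ℂ T
    have hmem : lam ∈ spectrum ℂ T := by
      rw [spectrum.mem_iff]
      intro hu
      apply hZ0
      have happ : (algebraMap ℂ (V →L[ℂ] V) lam - T) Z = 0 := by
        simp [ContinuousLinearMap.sub_apply, Algebra.algebraMap_eq_smul_one, key]
      obtain ⟨u, hu⟩ := hu
      have : (↑u⁻¹ * ↑u : V →L[ℂ] V) Z = (↑u⁻¹ : V →L[ℂ] V) 0 := by
        rw [ContinuousLinearMap.mul_apply, hu, happ]
      simpa using this
    have hle : (‖lam‖₊ : ENNReal) ≤ spectralRadius ℂ T :=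
      le_iSup₂ (f := fun (k : ℂ) (_ : k ∈ spectrum ℂ T) => (‖k‖₊ : ENNReal)) lam hmem
    have hlt : (‖lam‖₊ : ENNReal) < 1 := lt_of_le_of_lt hle hρ
    have : ‖lam‖₊ < 1 := by exact_mod_cast hlt
    simpa [← coe_nnnorm, NNReal.coe_lt_one] using this
end
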